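/- arXiv:0806.3249 — 2 statements merged into one kernel-verified Lean document; each statement's English description precedes it below -/
import Mathlib

section
/- Let G = (V,E) be a finite simple graph with n vertices and c connected components, and let v : E → ℝ satisfy −2 ≤ v_e ≤ 0 for every edge e. Then (−1)^n Z_G(q,v) > 0 for every real q < 0. Moreover, if −2 < v_e < 0 for every edge e, then the zero of the polynomial q ↦ Z_G(q,v) at q = 0 has multiplicity exactly c; that is, C_G^{[k]}(v) = 0 for 1 ≤ k < c and (−1)^{n−c} C_G^{[c]}(v) > 0. -/
/-!
Write the coefficient `C^{[k]}` of the graph `(V, E ∪ F)` with the edges of `F` contracted as a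
sum over subsets `A ⊆ E`. By induction on `|E|`, as long as no edge of `E` is
a loop after contracting `F`, the sign of this coefficient is `(-1)^(k(F) + k)` (weakly for
weights in `[-2, 0]`, strictly at `k = k(E ∪ F)` for weights in `(-2, 0)`). If two edges of `E`
become parallel, merge them into one edge of weight `(1 + v_a)(1 + v_b) - 1`, which stays in the
range; otherwise deletion–contraction along any edge `e` creates no loop, and since contracting
`e` lowers `k(F)` by one while `v_e ≤ 0`, both terms have the right sign.

For `F = ∅` this gives `(-1)^n Z_G(q, v) = ∑_k (-q)^k (-1)^(n + k) C^{[k]}` as a sum of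
nonnegative terms whose `k = n` term is `(-q)^n > 0`, the only spanning subgraph with `n`
components being the empty one. Every spanning subgraph has at least `c` components, so
`C^{[k]} = 0` for `k < c`.
-/

open Finset

/-- The number of connected components of the spanning subgraph of a finite graph
with edge set `A`. -/
noncomputable def numCompOfEdges {V : Type*} [Fintype V] (A : Finset (Sym2 V)) : ℕ :=
  Nat.card (SimpleGraph.fromEdgeSet (A : Set (Sym2 V))).ConnectedComponent

/-- The multivariate Tutte polynomial `Z_G(q, v) = ∑_{A ⊆ E} q^{k(A)} ∏_{e ∈ A} v_e`. -/
noncomputable def tutteZ {V : Type*} [Fintype V] [DecidableEq V] (G : SimpleGraph V)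
    [DecidableRel G.Adj] (q : ℝ) (v : Sym2 V → ℝ) : ℝ :=
  ∑ A ∈ G.edgeFinset.powerset, q ^ numCompOfEdges A * ∏ e ∈ A, v e

/-- The coefficient `C_G^{[k]}(v) = ∑_{A ⊆ E, k(A) = k} ∏_{e ∈ A} v_e` of `q^k` in the
multivariate Tutte polynomial `Z_G(q,v)`. -/
noncomputable def tutteCoeff {V : Type*} [Fintype V] [DecidableEq V] (G : SimpleGraph V)
    [DecidableRel G.Adj] (k : ℕ) (v : Sym2 V → ℝ) : ℝ :=
  ∑ A ∈ G.edgeFinset.powerset.filter (fun A => numCompOfEdges A = k), ∏ e ∈ A, v e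

open SimpleGraph

section Reachability

variable {V : Type*}

theorem reachable_fromEdgeSet_insert_iff {s : Set (Sym2 V)} {x y u w : V} :
    (fromEdgeSet (insert s(x, y) s)).Reachable u w ↔
      (fromEdgeSet s).Reachable u w ∨
        ((fromEdgeSet s).Reachable u x ∧ (fromEdgeSet s).Reachable y w) ∨
        ((fromEdgeSet s).Reachable u y ∧ (fromEdgeSet s).Reachable x w) := by
  constructor
  · rintro ⟨p⟩
    induction p with
    | nil => exact .inl .rfl
    | @cons a b _ hab _ ih =>
      obtain ⟨he | hs, hne⟩ := (fromEdgeSet_adj _).mp hab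
      · rcases Sym2.eq_iff.mp he with ⟨rfl, rfl⟩ | ⟨rfl, rfl⟩ <;>
          rcases ih with h | ⟨-, h⟩ | ⟨-, h⟩ <;> tauto
      · have hab : (fromEdgeSet s).Reachable a b :=
          ((fromEdgeSet_adj _).mpr ⟨hs, hne⟩).reachable
        rcases ih with h | ⟨h₁, h₂⟩ | ⟨h₁, h₂⟩
        exacts [.inl (hab.trans h), .inr (.inl ⟨hab.trans h₁, h₂⟩),
          .inr (.inr ⟨hab.trans h₁, h₂⟩)]
  · have hle : fromEdgeSet s ≤ fromEdgeSet (insert s(x, y) s) :=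
      fromEdgeSet_mono (Set.subset_insert _ _)
    have hxy : (fromEdgeSet (insert s(x, y) s)).Reachable x y := by
      by_cases h : x = y
      · exact h ▸ .rfl
      · exact ((fromEdgeSet_adj _).mpr ⟨Set.mem_insert _ _, h⟩).reachable
    rintro (h | ⟨h₁, h₂⟩ | ⟨h₁, h₂⟩)
    · exact h.mono hle
    · exact (h₁.mono hle).trans (hxy.trans (h₂.mono hle))
    · exact (h₁.mono hle).trans (hxy.symm.trans (h₂.mono hle))

end Reachability

section Contraction

variable {V : Type*}

-- The image of `e` after contracting the edges of `F`: its ends become components of `(V, F)`.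
def contractEdge (F : Finset (Sym2 V)) (e : Sym2 V) :
    Sym2 (fromEdgeSet (F : Set (Sym2 V))).ConnectedComponent :=
  e.map (fromEdgeSet (F : Set (Sym2 V))).connectedComponentMk

theorem contractEdge_isDiag_iff {F : Finset (Sym2 V)} {x y : V} :
    (contractEdge F s(x, y)).IsDiag ↔ (fromEdgeSet (F : Set (Sym2 V))).Reachable x y := by
  simp [contractEdge, ConnectedComponent.eq]

theorem not_isDiag_contractEdge_empty {e : Sym2 V} (he : ¬ e.IsDiag) :
    ¬ (contractEdge ∅ e).IsDiag := by
  induction e using Sym2.ind with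
  | h x y =>
  rwa [contractEdge_isDiag_iff, coe_empty, fromEdgeSet_empty, reachable_bot]

theorem contractEdge_isDiag_of_mem {F : Finset (Sym2 V)} {e : Sym2 V} (he : e ∈ F) :
    (contractEdge F e).IsDiag := by
  induction e using Sym2.ind with
  | h x y =>
    rw [contractEdge_isDiag_iff]
    by_cases hxy : x = y
    · exact hxy ▸ .rfl
    · exact ((fromEdgeSet_adj _).mpr ⟨he, hxy⟩).reachable

theorem contractEdge_of_subset {F X : Finset (Sym2 V)} (h : F ⊆ X) (e : Sym2 V) :
    contractEdge X e =
      (contractEdge F e).map (ConnectedComponent.map (Hom.ofLE (fromEdgeSet_mono (by simpa)))) := by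
  induction e using Sym2.ind with
  | h x y => rfl

theorem contractEdge_isDiag_of_parallel {F X : Finset (Sym2 V)} {a b : Sym2 V} (hFX : F ⊆ X)
    (ha : a ∈ X) (hpar : contractEdge F a = contractEdge F b) : (contractEdge X b).IsDiag := by
  rw [contractEdge_of_subset hFX, ← hpar, ← contractEdge_of_subset hFX]
  exact contractEdge_isDiag_of_mem ha

variable [DecidableEq V]

theorem contractEdge_insert_isDiag_iff {F : Finset (Sym2 V)} {e a : Sym2 V} :
    (contractEdge (insert e F) a).IsDiag ↔
      (contractEdge F a).IsDiag ∨ contractEdge F a = contractEdge F e := by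
  induction e using Sym2.ind with
  | h x y =>
  induction a using Sym2.ind with
  | h u w =>
  rw [contractEdge_isDiag_iff, contractEdge_isDiag_iff, Finset.coe_insert,
    reachable_fromEdgeSet_insert_iff]
  simp only [contractEdge, Sym2.map_mk, Sym2.eq_iff, ConnectedComponent.eq]
  rw [reachable_comm (u := w) (v := y), reachable_comm (u := w) (v := x)]

theorem exists_parallel_or_forall_not_isDiag_contractEdge_insert {E F : Finset (Sym2 V)}
    {e : Sym2 V} (he : e ∈ E) (hloop : ∀ a ∈ E, ¬ (contractEdge F a).IsDiag) :
    (∃ a ∈ E, ∃ b ∈ E, a ≠ b ∧ contractEdge F a = contractEdge F b) ∨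
      ∀ a ∈ E.erase e, ¬ (contractEdge (insert e F) a).IsDiag := by
  refine or_iff_not_imp_left.mpr fun hpar a ha hdiag => ?_
  obtain ⟨hae, haE⟩ := mem_erase.mp ha
  rcases contractEdge_insert_isDiag_iff.mp hdiag with h | h
  exacts [hloop a haE h, hpar ⟨a, haE, e, he, hae, h⟩]

end Contraction

section Components

variable {V : Type*} [Fintype V]

theorem numCompOfEdges_antitone : Antitone (numCompOfEdges (V := V)) := fun _ _ h =>
  ConnectedComponent.card_le_card_of_le (fromEdgeSet_mono (by simpa))

theorem numCompOfEdges_empty : numCompOfEdges (∅ : Finset (Sym2 V)) = Fintype.card V := by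
  rw [numCompOfEdges, Finset.coe_empty, fromEdgeSet_empty, ← Nat.card_eq_fintype_card]
  refine (Nat.card_eq_of_bijective _ ⟨fun u w h => ?_, Quot.mk_surjective⟩).symm
  exact reachable_bot.mp (ConnectedComponent.eq.mp h)

theorem numCompOfEdges_edgeFinset (G : SimpleGraph V) [DecidableRel G.Adj] :
    numCompOfEdges G.edgeFinset = Nat.card G.ConnectedComponent := by
  rw [numCompOfEdges, coe_edgeFinset, fromEdgeSet_edgeSet]

variable [DecidableEq V]

theorem numCompOfEdges_insert_of_isDiag {F : Finset (Sym2 V)} {e : Sym2 V}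
    (he : (contractEdge F e).IsDiag) : numCompOfEdges (insert e F) = numCompOfEdges F := by
  induction e using Sym2.ind with
  | h x y =>
  have hle : fromEdgeSet (F : Set (Sym2 V)) ≤ fromEdgeSet (insert s(x, y) F : Finset _) :=
    fromEdgeSet_mono (by simp)
  refine (Nat.card_eq_of_bijective (ConnectedComponent.map (Hom.ofLE hle))
    ⟨fun c c' h => ?_, ConnectedComponent.surjective_map_ofLE hle⟩).symm
  induction c, c' using ConnectedComponent.ind₂ with
  | h u w =>
  have hxy := contractEdge_isDiag_iff.mp he
  simp only [ConnectedComponent.map_mk, ConnectedComponent.eq, Finset.coe_insert,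
    reachable_fromEdgeSet_insert_iff] at h ⊢
  rcases h with h | ⟨h₁, h₂⟩ | ⟨h₁, h₂⟩
  exacts [h, h₁.trans (hxy.trans h₂), h₁.trans (hxy.symm.trans h₂)]

theorem numCompOfEdges_insert_of_not_isDiag {F : Finset (Sym2 V)} {e : Sym2 V}
    (he : ¬ (contractEdge F e).IsDiag) : numCompOfEdges F = numCompOfEdges (insert e F) + 1 := by
  induction e using Sym2.ind with
  | h x y =>
  set H := fromEdgeSet (F : Set (Sym2 V))
  have hle : H ≤ fromEdgeSet (insert s(x, y) F : Finset _) := fromEdgeSet_mono (by simp)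
  set f := ConnectedComponent.map (Hom.ofLE hle)
  have hxy := contractEdge_isDiag_iff.not.mp he
  -- Only the components of `x` and `y` get merged, so `f` is a bijection off the component of `y`.
  have hinj : Set.InjOn f {H.connectedComponentMk y}ᶜ := by
    intro c hc c' hc' h
    induction c, c' using ConnectedComponent.ind₂ with
    | h u w =>
    simp only [Set.mem_compl_singleton_iff, ne_eq, ConnectedComponent.eq] at hc hc'
    simp only [f, ConnectedComponent.map_mk, ConnectedComponent.eq, Finset.coe_insert,
      reachable_fromEdgeSet_insert_iff] at h ⊢
    rcases h with h | ⟨-, h⟩ | ⟨h, -⟩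
    exacts [h, absurd h.symm hc', absurd h hc]
  have himage : f '' {H.connectedComponentMk y}ᶜ = Set.univ := by
    refine Set.eq_univ_of_forall fun c => ?_
    induction c using ConnectedComponent.ind with
    | h u =>
    by_cases hu : H.Reachable u y
    · refine ⟨H.connectedComponentMk x, fun h => hxy (ConnectedComponent.eq.mp h), ?_⟩
      have hxu := reachable_fromEdgeSet_insert_iff.mpr (.inr (.inl ⟨Reachable.refl x, hu.symm⟩))
      rw [← Finset.coe_insert] at hxu
      exact ConnectedComponent.eq.mpr hxu
    · exact ⟨H.connectedComponentMk u, fun h => hu (ConnectedComponent.eq.mp h), rfl⟩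
  calc numCompOfEdges F = ({H.connectedComponentMk y}ᶜ : Set _).ncard + 1 := by
        rw [numCompOfEdges, ← Set.ncard_univ, Set.compl_eq_univ_sdiff,
          Set.ncard_sdiff_singleton_add_one (Set.mem_univ _)]
    _ = numCompOfEdges (insert s(x, y) F) + 1 := by
        rw [← hinj.ncard_image, himage, Set.ncard_univ, numCompOfEdges]

theorem numCompOfEdges_lt_card {A : Finset (Sym2 V)} {e : Sym2 V} (he : e ∈ A)
    (hdiag : ¬ e.IsDiag) : numCompOfEdges A < Fintype.card V := by
  have h := numCompOfEdges_insert_of_not_isDiag (not_isDiag_contractEdge_empty hdiag)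
  rw [numCompOfEdges_empty] at h
  have := numCompOfEdges_antitone (insert_subset_iff.mpr ⟨he, empty_subset A⟩)
  omega

end Components

section ContractedCoeff

variable {V : Type*} [Fintype V] [DecidableEq V]

/-- `C^{[k]}` of `(V, E ∪ F) / F`: there the spanning subgraph with edge set `A ⊆ E` has the
components of `(V, A ∪ F)`. -/
noncomputable def contractedCoeff (E F : Finset (Sym2 V)) (k : ℕ) (v : Sym2 V → ℝ) : ℝ :=
  ∑ A ∈ E.powerset, if numCompOfEdges (A ∪ F) = k then ∏ e ∈ A, v e else 0

theorem contractedCoeff_empty_left (F : Finset (Sym2 V)) (k : ℕ) (v : Sym2 V → ℝ) :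
    contractedCoeff ∅ F k v = if numCompOfEdges F = k then 1 else 0 := by
  simp [contractedCoeff]

theorem contractedCoeff_congr {E F : Finset (Sym2 V)} {k : ℕ} {v w : Sym2 V → ℝ}
    (h : ∀ e ∈ E, v e = w e) : contractedCoeff E F k v = contractedCoeff E F k w :=
  sum_congr rfl fun A hA => by
    rw [prod_congr rfl fun e he => h e (mem_powerset.mp hA he)]

theorem contractedCoeff_eq_delete_add_contract {E F : Finset (Sym2 V)} {e : Sym2 V} (he : e ∈ E)
    (k : ℕ) (v : Sym2 V → ℝ) :
    contractedCoeff E F k v =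
      contractedCoeff (E.erase e) F k v + v e * contractedCoeff (E.erase e) (insert e F) k v := by
  rw [contractedCoeff, ← insert_erase he, sum_powerset_insert (notMem_erase e E),
    erase_insert_eq_erase, erase_idem]
  congr 1
  rw [contractedCoeff, mul_sum]
  refine sum_congr rfl fun A hA => ?_
  have heA : e ∉ A := fun h => notMem_erase e E (mem_powerset.mp hA h)
  rw [prod_insert heA, insert_union, ← union_insert, mul_ite, mul_zero]

theorem contractedCoeff_insert_of_isDiag {E F : Finset (Sym2 V)} {e : Sym2 V}
    (he : (contractEdge F e).IsDiag) (k : ℕ) (v : Sym2 V → ℝ) :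
    contractedCoeff E (insert e F) k v = contractedCoeff E F k v := by
  refine sum_congr rfl fun A _ => ?_
  have he' : (contractEdge (A ∪ F) e).IsDiag := by
    rw [contractEdge_of_subset subset_union_right]
    exact he.map
  rw [union_insert, numCompOfEdges_insert_of_isDiag he']

/-- Parallel edges of weights `a` and `b` act as one edge of weight `(1 + a) * (1 + b) - 1`. -/
theorem contractedCoeff_merge_parallel {E F : Finset (Sym2 V)} {a b : Sym2 V} (ha : a ∈ E)
    (hb : b ∈ E) (hab : a ≠ b) (hpar : contractEdge F a = contractEdge F b) (k : ℕ)
    (v : Sym2 V → ℝ) :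
    contractedCoeff E F k v =
      contractedCoeff (E.erase b) F k (Function.update v a (v a + v b + v a * v b)) := by
  have ha' : a ∈ E.erase b := mem_erase.mpr ⟨hab, ha⟩
  have hdiag {e f : Sym2 V} (h : contractEdge F f = contractEdge F e) :
      (contractEdge (insert f F) e).IsDiag :=
    contractEdge_isDiag_of_parallel (subset_insert f F) (mem_insert_self f F) h
  have hswap : ∀ v', contractedCoeff ((E.erase b).erase a) (insert b F) k v' =
      contractedCoeff ((E.erase b).erase a) (insert a F) k v' := fun v' => by
    rw [← contractedCoeff_insert_of_isDiag (hdiag hpar.symm), insert_comm,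
      contractedCoeff_insert_of_isDiag (hdiag hpar)]
  have hagree :
      ∀ e ∈ (E.erase b).erase a, v e = Function.update v a (v a + v b + v a * v b) e :=
    fun e he => (Function.update_of_ne (ne_of_mem_erase he) _ _).symm
  rw [contractedCoeff_eq_delete_add_contract hb, contractedCoeff_eq_delete_add_contract ha',
    contractedCoeff_eq_delete_add_contract (F := insert b F) ha',
    contractedCoeff_insert_of_isDiag (hdiag hpar.symm), hswap,
    contractedCoeff_eq_delete_add_contract ha', Function.update_self,
    contractedCoeff_congr hagree, contractedCoeff_congr (F := insert a F) hagree]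
  ring

end ContractedCoeff

-- The weights in `[-2, 0]` are those with `|1 + v| ≤ 1`, a set closed under products of `1 + v`.
theorem add_add_mul_mem_Icc {a b : ℝ} (ha : a ∈ Set.Icc (-2) 0) (hb : b ∈ Set.Icc (-2) 0) :
    a + b + a * b ∈ Set.Icc (-2) 0 := by
  obtain ⟨ha₁, ha₂⟩ := ha
  obtain ⟨hb₁, hb₂⟩ := hb
  constructor <;> nlinarith [mul_nonneg (neg_nonneg.mpr ha₂) (neg_nonneg.mpr hb₂),
    mul_nonneg (by linarith : 0 ≤ a + 2) (by linarith : 0 ≤ b + 2),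
    mul_nonneg (by linarith : 0 ≤ a + 2) (neg_nonneg.mpr hb₂)]

theorem add_add_mul_mem_Ioo {a b : ℝ} (ha : a ∈ Set.Ioo (-2) 0) (hb : b ∈ Set.Ioo (-2) 0) :
    a + b + a * b ∈ Set.Ioo (-2) 0 := by
  obtain ⟨ha₁, ha₂⟩ := ha
  obtain ⟨hb₁, hb₂⟩ := hb
  constructor <;> nlinarith [mul_pos (neg_pos.mpr ha₂) (neg_pos.mpr hb₂),
    mul_pos (by linarith : 0 < a + 2) (by linarith : 0 < b + 2),
    mul_pos (by linarith : 0 < a + 2) (neg_pos.mpr hb₂)]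

section Positivity

variable {V : Type*} [Fintype V] [DecidableEq V]

theorem neg_one_pow_mul_contractedCoeff_nonneg {E F : Finset (Sym2 V)} {v : Sym2 V → ℝ}
    (hloop : ∀ e ∈ E, ¬ (contractEdge F e).IsDiag) (hv : ∀ e ∈ E, v e ∈ Set.Icc (-2) 0)
    (k : ℕ) : 0 ≤ (-1) ^ (numCompOfEdges F + k) * contractedCoeff E F k v := by
  induction E using Finset.strongInduction generalizing F v with
  | H E ih =>
  rcases E.eq_empty_or_nonempty with rfl | ⟨e, he⟩
  · rw [contractedCoeff_empty_left]
    split_ifs with h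
    · rw [h, ← two_mul, pow_mul]; norm_num
    · rw [mul_zero]
  rcases exists_parallel_or_forall_not_isDiag_contractEdge_insert he hloop with
    ⟨a, ha, b, hb, hab, hpar⟩ | hloop'
  · rw [contractedCoeff_merge_parallel ha hb hab hpar]
    exact ih _ (erase_ssubset hb) (fun x hx => hloop x (mem_of_mem_erase hx))
      ((Function.forall_update_iff v fun x w => x ∈ E.erase b → w ∈ Set.Icc (-2) 0).mpr
        ⟨fun _ => add_add_mul_mem_Icc (hv a ha) (hv b hb),
          fun x _ hx => hv x (mem_of_mem_erase hx)⟩)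
  · have hloop_erase (x) (hx : x ∈ E.erase e) := hloop x (mem_of_mem_erase hx)
    have hv' (x) (hx : x ∈ E.erase e) := hv x (mem_of_mem_erase hx)
    have hdel := ih _ (erase_ssubset he) hloop_erase hv'
    have hcon := ih _ (erase_ssubset he) hloop' hv'
    rw [numCompOfEdges_insert_of_not_isDiag (hloop e he), add_right_comm, pow_succ] at hdel ⊢
    rw [contractedCoeff_eq_delete_add_contract he]
    nlinarith [mul_nonneg (neg_nonneg.mpr (hv e he).2) hcon]

theorem neg_one_pow_mul_contractedCoeff_pos {E F : Finset (Sym2 V)} {v : Sym2 V → ℝ}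
    (hloop : ∀ e ∈ E, ¬ (contractEdge F e).IsDiag) (hv : ∀ e ∈ E, v e ∈ Set.Ioo (-2) 0) :
    0 < (-1) ^ (numCompOfEdges F + numCompOfEdges (E ∪ F)) *
      contractedCoeff E F (numCompOfEdges (E ∪ F)) v := by
  induction E using Finset.strongInduction generalizing F v with
  | H E ih =>
  rcases E.eq_empty_or_nonempty with rfl | ⟨e, he⟩
  · rw [contractedCoeff_empty_left, empty_union, if_pos rfl, mul_one, ← two_mul, pow_mul]
    norm_num
  rcases exists_parallel_or_forall_not_isDiag_contractEdge_insert he hloop with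
    ⟨a, ha, b, hb, hab, hpar⟩ | hloop'
  · have hEF : E ∪ F = insert b (E.erase b ∪ F) := by rw [← insert_union, insert_erase hb]
    have hb_loop : (contractEdge (E.erase b ∪ F) b).IsDiag :=
      contractEdge_isDiag_of_parallel subset_union_right
        (mem_union_left _ (mem_erase.mpr ⟨hab, ha⟩)) hpar
    rw [hEF, numCompOfEdges_insert_of_isDiag hb_loop,
      contractedCoeff_merge_parallel ha hb hab hpar]
    exact ih _ (erase_ssubset hb) (fun x hx => hloop x (mem_of_mem_erase hx))
      ((Function.forall_update_iff v fun x w => x ∈ E.erase b → w ∈ Set.Ioo (-2) 0).mpr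
        ⟨fun _ => add_add_mul_mem_Ioo (hv a ha) (hv b hb),
          fun x _ hx => hv x (mem_of_mem_erase hx)⟩)
  · have hloop_erase (x) (hx : x ∈ E.erase e) := hloop x (mem_of_mem_erase hx)
    have hv' (x) (hx : x ∈ E.erase e) := hv x (mem_of_mem_erase hx)
    have hdel := neg_one_pow_mul_contractedCoeff_nonneg hloop_erase
      (fun x hx => Set.Ioo_subset_Icc_self (hv' x hx)) (numCompOfEdges (E ∪ F))
    have hcon := ih _ (erase_ssubset he) hloop' hv'
    rw [union_insert, ← insert_union, insert_erase he] at hcon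
    rw [numCompOfEdges_insert_of_not_isDiag (hloop e he), add_right_comm, pow_succ] at hdel ⊢
    rw [contractedCoeff_eq_delete_add_contract he]
    nlinarith [mul_pos (neg_pos.mpr (hv e he).2) hcon]

end Positivity

section TutteCoeff

variable {V : Type*} [Fintype V] [DecidableEq V] (G : SimpleGraph V) [DecidableRel G.Adj]

theorem tutteCoeff_eq_contractedCoeff (k : ℕ) (v : Sym2 V → ℝ) :
    tutteCoeff G k v = contractedCoeff G.edgeFinset ∅ k v := by
  simp [tutteCoeff, contractedCoeff, sum_filter]

theorem tutteZ_eq_sum_tutteCoeff (q : ℝ) (v : Sym2 V → ℝ) :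
    tutteZ G q v = ∑ k ∈ range (Fintype.card V + 1), q ^ k * tutteCoeff G k v := by
  have hle (A : Finset (Sym2 V)) : numCompOfEdges A ≤ Fintype.card V :=
    numCompOfEdges_empty (V := V) ▸ numCompOfEdges_antitone (empty_subset A)
  rw [tutteZ, ← sum_fiberwise_of_maps_to (g := numCompOfEdges) fun A _ =>
    mem_range_succ_iff.mpr (hle A)]
  refine sum_congr rfl fun k _ => ?_
  rw [tutteCoeff, mul_sum]
  exact sum_congr rfl fun A hA => by rw [(mem_filter.mp hA).2]

theorem tutteCoeff_card (v : Sym2 V → ℝ) : tutteCoeff G (Fintype.card V) v = 1 := by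
  have h : G.edgeFinset.powerset.filter (fun A => numCompOfEdges A = Fintype.card V) = {∅} := by
    ext A
    simp only [mem_filter, mem_powerset, mem_singleton]
    constructor
    · rintro ⟨hA, hcard⟩
      by_contra hne
      obtain ⟨e, he⟩ := nonempty_iff_ne_empty.mpr hne
      exact (numCompOfEdges_lt_card he (G.not_isDiag_of_mem_edgeFinset (hA he))).ne hcard
    · rintro rfl
      exact ⟨empty_subset _, numCompOfEdges_empty⟩
  rw [tutteCoeff, h, sum_singleton, prod_empty]

theorem tutteCoeff_eq_zero_of_lt {k : ℕ} (hk : k < Nat.card G.ConnectedComponent)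
    (v : Sym2 V → ℝ) : tutteCoeff G k v = 0 := by
  refine sum_eq_zero fun A hA => ?_
  obtain ⟨hAE, rfl⟩ := mem_filter.mp hA
  have := numCompOfEdges_antitone (mem_powerset.mp hAE)
  rw [numCompOfEdges_edgeFinset] at this
  omega

theorem neg_one_pow_card_mul_tutteZ_pos {v : Sym2 V → ℝ}
    (hC : ∀ k, 0 ≤ (-1 : ℝ) ^ (Fintype.card V + k) * tutteCoeff G k v) {q : ℝ}
    (hq : q < 0) :
    0 < (-1) ^ Fintype.card V * tutteZ G q v := by
  have hterm (k : ℕ) : (-1) ^ Fintype.card V * (q ^ k * tutteCoeff G k v) =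
      (-q) ^ k * ((-1 : ℝ) ^ (Fintype.card V + k) * tutteCoeff G k v) := by
    have : ((-1 : ℝ) ^ k) ^ 2 = 1 := by rw [← pow_mul, mul_comm, pow_mul, neg_one_sq, one_pow]
    rw [neg_pow, pow_add]
    linear_combination -((-1) ^ Fintype.card V * q ^ k * tutteCoeff G k v) * this
  rw [tutteZ_eq_sum_tutteCoeff, mul_sum]
  refine sum_pos' (fun k _ => hterm k ▸ mul_nonneg (pow_nonneg (by linarith) k) (hC k))
    ⟨_, self_mem_range_succ _, ?_⟩
  rw [hterm, tutteCoeff_card, mul_one, ← two_mul, pow_mul, neg_one_sq, one_pow, mul_one]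
  exact pow_pos (neg_pos.mpr hq) _

end TutteCoeff

/-- For a finite simple graph `G` with `n` vertices and `c` components and edge weights
`-2 ≤ v_e ≤ 0`:  `(-1)^n Z_G(q,v) > 0` for every real `q < 0`.  Moreover, if
`-2 < v_e < 0` for every edge, then the zero of `q ↦ Z_G(q,v)` at `q = 0` has
multiplicity exactly `c`, i.e. `C_G^{[k]}(v) = 0` for `1 ≤ k < c` and
`(-1)^{n-c} C_G^{[c]}(v) > 0`. -/
theorem tutteZ_pos_of_neg_q {V : Type*} [Fintype V] [DecidableEq V]
    (G : SimpleGraph V) [DecidableRel G.Adj] (v : Sym2 V → ℝ)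
    (n c : ℕ) (hn : n = Fintype.card V) (hc : c = Nat.card G.ConnectedComponent)
    (hv : ∀ e ∈ G.edgeFinset, -2 ≤ v e ∧ v e ≤ 0) :
    (∀ q : ℝ, q < 0 → 0 < (-1 : ℝ) ^ n * tutteZ G q v) ∧
    ((∀ e ∈ G.edgeFinset, -2 < v e ∧ v e < 0) →
      (∀ k, 1 ≤ k → k < c → tutteCoeff G k v = 0) ∧
      0 < (-1 : ℝ) ^ ((n : ℤ) - c) * tutteCoeff G c v) := by
  subst hn hc
  have hloop (e) (he : e ∈ G.edgeFinset) : ¬ (contractEdge ∅ e).IsDiag :=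
    not_isDiag_contractEdge_empty (G.not_isDiag_of_mem_edgeFinset he)
  have hsign (k : ℕ) : 0 ≤ (-1 : ℝ) ^ (Fintype.card V + k) * tutteCoeff G k v := by
    have := neg_one_pow_mul_contractedCoeff_nonneg hloop hv k
    rwa [numCompOfEdges_empty, ← tutteCoeff_eq_contractedCoeff] at this
  refine ⟨fun q hq => neg_one_pow_card_mul_tutteZ_pos G hsign hq,
    fun hv' => ⟨fun k _ hk => tutteCoeff_eq_zero_of_lt G hk v, ?_⟩⟩
  have hpos := neg_one_pow_mul_contractedCoeff_pos hloop hv'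
  rw [numCompOfEdges_empty, union_empty, numCompOfEdges_edgeFinset,
    ← tutteCoeff_eq_contractedCoeff] at hpos
  rwa [zpow_sub₀ (by norm_num), zpow_natCast, zpow_natCast, div_eq_mul_inv, ← inv_pow, inv_neg,
    inv_one, ← pow_add]
end

section
/- Let M be a matroid with finite ground set E and rank function r, let e₁,…,e_ℓ ∈ E be distinct elements whose set S = {e₁,…,e_ℓ} has rank ρ = r(S), and let v : E → ℝ satisfy: −2 ≤ v_e ≤ 0 for all e ∈ E∖S that are not spanned by S, and v_e ≥ −1 for all e ∈ E∖S that are spanned by S (here e is spanned by S means r(S ∪ {e}) = r(S)). Then for every 0 ≤ s ≤ r(E), the mixed partial derivative of order ℓ of the function v ↦ C̃_M^{[s]}(v) with respect to the coordinates v_{e₁},…,v_{e_ℓ}, evaluated at v, satisfies (−1)^{s+ρ} · ∂^ℓ C̃_M^{[s]}(v)/∂v_{e₁}⋯∂v_{e_ℓ} ≥ 0. -/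
open Finset

/-- A matroid with ground set the finite type `α`, presented by its rank function
(normalized, monotone, submodular). -/
structure RankMatroid (α : Type*) [DecidableEq α] where
  r : Finset α → ℕ
  r_le_card : ∀ A : Finset α, r A ≤ A.card
  mono : ∀ ⦃A B : Finset α⦄, A ⊆ B → r A ≤ r B
  submodular : ∀ A B : Finset α, r (A ∪ B) + r (A ∩ B) ≤ r A + r B

/-- The coefficient `C̃_M^{[s]}(v) = ∑_{A ⊆ E, r(A) = s} ∏_{e ∈ A} v_e` of `q^{-s}` in
`Z̃_M(q,v)`, as a (multiaffine polynomial) function of the edge weights `v`. -/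
noncomputable def matCoeff {α : Type*} [DecidableEq α] [Fintype α] (M : RankMatroid α)
    (s : ℕ) (v : α → ℝ) : ℝ :=
  ∑ A ∈ (Finset.univ : Finset α).powerset.filter (fun A => M.r A = s), ∏ e ∈ A, v e

/-!
Differentiating `∏_{a ∈ A} v_a` in the distinct directions `e_i` kills every `A ⊉ S` and
leaves `∏_{a ∈ A \ S} v_a`, so the mixed partial is the coefficient `C̃^{[s - ρ]}` of the
contraction `M / S` on `E \ S` (it vanishes if `s < ρ`). The hypotheses on `v` say that
`v ≥ -1` on the loops of `M / S` and `-2 ≤ v ≤ 0` on its non-loops, and for such weights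
`(-1)^k C̃^{[k]} ≥ 0` by induction on the ground set: a loop contributes a factor `1 + v ≥ 0`;
two parallel elements of weights `x, y` merge into one of weight `(1 + x)(1 + y) - 1 ∈ [-2, 0]`;
and in a simple matroid, deletion–contraction of a point `t` gives
`C̃^{[k+1]}(M) = C̃^{[k+1]}(M \ t) + v_t C̃^{[k]}(M / t)`, where `M / t` again has no loops
and `v_t ≤ 0`.
-/

namespace RankMatroid

variable {α : Type*} [DecidableEq α] (M : RankMatroid α)

lemma r_empty : M.r ∅ = 0 := Nat.le_zero.mp (M.r_le_card ∅)

lemma r_singleton_le_one (a : α) : M.r {a} ≤ 1 := by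
  simpa using M.r_le_card {a}

lemma r_insert_le (a : α) (X : Finset α) : M.r (insert a X) ≤ M.r X + 1 := by
  have h := M.submodular X {a}
  rw [union_comm, ← insert_eq] at h
  have := M.r_singleton_le_one a
  omega

lemma r_union_le_add_card (X B : Finset α) : M.r (X ∪ B) ≤ M.r X + B.card := by
  induction B using Finset.induction_on with
  | empty => simp
  | insert a B ha ih =>
    rw [union_insert, card_insert_of_notMem ha]
    have := M.r_insert_le a (X ∪ B)
    omega

lemma r_insert_of_loop {t : α} (ht : M.r {t} = 0) (B : Finset α) :
    M.r (insert t B) = M.r B := by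
  have h := M.submodular B {t}
  rw [union_comm, ← insert_eq, ht] at h
  have := M.mono (subset_insert t B)
  omega

lemma r_insert_of_parallel {e f : α} (he : M.r {e} ≠ 0) (hr : M.r {e, f} = 1)
    {A : Finset α} (heA : e ∈ A) : M.r (insert f A) = M.r A := by
  have h := M.submodular A {e, f}
  have hinter : M.r {e} ≤ M.r (A ∩ {e, f}) := M.mono (by simp [heA])
  have hunion : M.r (insert f A) ≤ M.r (A ∪ {e, f}) := M.mono (by
    intro x; simp only [mem_insert, mem_union, mem_singleton]; tauto)
  have := M.mono (subset_insert f A)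
  omega

def contract (S : Finset α) : RankMatroid α where
  r B := M.r (S ∪ B) - M.r S
  r_le_card B := by
    have := M.r_union_le_add_card S B
    omega
  mono _ _ h := Nat.sub_le_sub_right (M.mono (union_subset_union_right h)) _
  submodular A B := by
    show M.r (S ∪ (A ∪ B)) - M.r S + (M.r (S ∪ (A ∩ B)) - M.r S)
      ≤ M.r (S ∪ A) - M.r S + (M.r (S ∪ B) - M.r S)
    have h := M.submodular (S ∪ A) (S ∪ B)
    rw [← union_union_distrib_left, ← union_inter_distrib_left] at h
    have hS : ∀ X, M.r S ≤ M.r (S ∪ X) := fun X => M.mono subset_union_left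
    have := hS (A ∩ B)
    have := hS (A ∪ B)
    omega

lemma contract_r (S B : Finset α) : (M.contract S).r B = M.r (S ∪ B) - M.r S := rfl

lemma contract_r_singleton_eq_zero_iff (S : Finset α) (a : α) :
    (M.contract S).r {a} = 0 ↔ M.r (insert a S) = M.r S := by
  rw [contract_r, union_singleton]
  have := M.mono (subset_insert a S)
  omega

section Coefficients

variable {R : Type*} [CommRing R]

/-- The coefficient `C̃^{[k]}` of the restriction `M | U`. -/
def coeffOn (U : Finset α) (k : ℕ) (v : α → R) : R :=
  ∑ A ∈ U.powerset.filter (fun A => M.r A = k), ∏ a ∈ A, v a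

lemma coeffOn_eq_sum_ite (U : Finset α) (k : ℕ) (v : α → R) :
    M.coeffOn U k v = ∑ A ∈ U.powerset, if M.r A = k then ∏ a ∈ A, v a else 0 :=
  sum_filter _ _

lemma coeffOn_empty (k : ℕ) (v : α → R) : M.coeffOn ∅ k v = if k = 0 then 1 else 0 := by
  simp [coeffOn_eq_sum_ite, r_empty, eq_comm]

lemma coeffOn_insert {t : α} {W : Finset α} (ht : t ∉ W) (k : ℕ) (v : α → R) :
    M.coeffOn (insert t W) k v = M.coeffOn W k v
      + v t * ∑ B ∈ W.powerset, if M.r (insert t B) = k then ∏ a ∈ B, v a else 0 := by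
  rw [coeffOn_eq_sum_ite, sum_powerset_insert ht, ← coeffOn_eq_sum_ite, mul_sum]
  congr 1
  refine sum_congr rfl fun B hB => ?_
  rw [prod_insert fun htB => ht (mem_powerset.1 hB htB)]
  split_ifs <;> ring

lemma coeffOn_insert_of_loop {t : α} {W : Finset α} (ht : t ∉ W) (h0 : M.r {t} = 0)
    (k : ℕ) (v : α → R) : M.coeffOn (insert t W) k v = (1 + v t) * M.coeffOn W k v := by
  simp only [coeffOn_insert M ht, M.r_insert_of_loop h0, ← coeffOn_eq_sum_ite]
  ring

lemma coeffOn_insert_zero_of_nonloop {t : α} {W : Finset α} (ht : t ∉ W)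
    (hnonloop : M.r {t} ≠ 0) (v : α → R) : M.coeffOn (insert t W) 0 v = M.coeffOn W 0 v := by
  rw [coeffOn_insert M ht, sum_eq_zero fun B _ => if_neg ?_, mul_zero, add_zero]
  have := M.mono (singleton_subset_iff.2 (mem_insert_self t B))
  omega

lemma coeffOn_insert_succ_of_nonloop {t : α} {W : Finset α} (ht : t ∉ W)
    (hnonloop : M.r {t} ≠ 0) (k : ℕ) (v : α → R) :
    M.coeffOn (insert t W) (k + 1) v
      = M.coeffOn W (k + 1) v + v t * (M.contract {t}).coeffOn W k v := by
  rw [coeffOn_insert M ht, coeffOn_eq_sum_ite (M.contract {t})]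
  congr 2
  refine sum_congr rfl fun B _ => ?_
  have := M.mono (singleton_subset_iff.2 (mem_insert_self t B))
  have := M.r_singleton_le_one t
  rw [contract_r, ← insert_eq]
  exact if_congr (by omega) rfl rfl

lemma coeffOn_congr {U : Finset α} {v w : α → R} (h : ∀ a ∈ U, v a = w a) (k : ℕ) :
    M.coeffOn U k v = M.coeffOn U k w :=
  sum_congr rfl fun _ hA =>
    prod_congr rfl fun a ha => h a (mem_powerset.1 (mem_filter.1 hA).1 ha)

lemma coeffOn_insert_of_parallel {e f : α} {W : Finset α} (heW : e ∈ W) (hfW : f ∉ W)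
    (he : M.r {e} ≠ 0) (hf : M.r {f} ≠ 0) (hr : M.r {e, f} = 1) (k : ℕ) (v : α → R) :
    M.coeffOn (insert f W) k v
      = M.coeffOn W k (Function.update v e (v e + v f + v e * v f)) := by
  obtain ⟨W, heW', rfl⟩ : ∃ W', e ∉ W' ∧ W = insert e W' :=
    ⟨W.erase e, notMem_erase e W, (insert_erase heW).symm⟩
  have hrank : ∀ B, M.r (insert f (insert e B)) = M.r (insert e B)
      ∧ M.r (insert f B) = M.r (insert e B) := fun B => by
    have hfe := M.r_insert_of_parallel he hr (mem_insert_self e B)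
    have hef := M.r_insert_of_parallel hf (by rwa [pair_comm]) (mem_insert_self f B)
    rw [insert_comm, hfe] at hef
    exact ⟨hfe, hef.symm⟩
  set X := ∑ B ∈ W.powerset, if M.r (insert e B) = k then ∏ a ∈ B, v a else 0
  have hY : (∑ B ∈ (insert e W).powerset,
      if M.r (insert f B) = k then ∏ a ∈ B, v a else 0) = (1 + v e) * X := by
    rw [sum_powerset_insert heW', add_mul, one_mul, mul_sum]
    congr 1
    · exact sum_congr rfl fun B _ => by rw [(hrank B).2]
    · refine sum_congr rfl fun B hB => ?_
      rw [(hrank B).1, prod_insert fun h => heW' (mem_powerset.1 hB h)]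
      split_ifs <;> ring
  have hupdate : ∀ a ∈ W, v a = Function.update v e (v e + v f + v e * v f) a :=
    fun a ha => (Function.update_of_ne (ne_of_mem_of_not_mem ha heW') _ _).symm
  have hX : X = ∑ B ∈ W.powerset, if M.r (insert e B) = k
      then ∏ a ∈ B, Function.update v e (v e + v f + v e * v f) a else 0 :=
    sum_congr rfl fun B hB => by
      rw [prod_congr rfl fun a ha => hupdate a (mem_powerset.1 hB ha)]
  rw [coeffOn_insert M hfW, hY, coeffOn_insert M heW', coeffOn_insert M heW', ← hX,
    Function.update_self, M.coeffOn_congr hupdate]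
  ring

lemma coeffOn_contract_compl [Fintype α] (S : Finset α) (k : ℕ) (v : α → R) :
    (M.contract S).coeffOn (univ \ S) k v
      = ∑ A ∈ univ.powerset.filter (fun A => M.r A = M.r S + k ∧ S ⊆ A), ∏ a ∈ A \ S, v a := by
  have hS : ∀ X, M.r S ≤ M.r (S ∪ X) := fun X => M.mono subset_union_left
  have hdisj : ∀ B ∈ (univ \ S).powerset.filter (fun B => (M.contract S).r B = k),
      Disjoint S B := fun _ hB =>
    disjoint_of_subset_right (mem_powerset.1 (mem_filter.1 hB).1) disjoint_sdiff
  refine sum_nbij' (S ∪ ·) (· \ S) (fun B hB => ?_) (fun A hA => ?_) (fun B hB => ?_)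
    (fun A hA => ?_) (fun B hB => ?_)
  · rw [mem_filter, contract_r] at hB
    have := hS B
    exact mem_filter.2 ⟨mem_powerset.2 (subset_univ _), by omega, subset_union_left⟩
  · obtain ⟨-, hrA, hSA⟩ := mem_filter.1 hA
    refine mem_filter.2 ⟨mem_powerset.2 (sdiff_subset_sdiff (subset_univ A) le_rfl), ?_⟩
    rw [contract_r, union_sdiff_of_subset hSA]
    omega
  · exact union_sdiff_cancel_left (hdisj _ hB)
  · exact union_sdiff_of_subset (mem_filter.1 hA).2.2
  · simp only [union_sdiff_cancel_left (hdisj _ hB)]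

end Coefficients

def IsAdmissible (U : Finset α) (v : α → ℝ) : Prop :=
  ∀ a ∈ U, (M.r {a} = 0 → -1 ≤ v a) ∧ (M.r {a} ≠ 0 → -2 ≤ v a ∧ v a ≤ 0)

variable {M}

lemma IsAdmissible.mono {U V : Finset α} {v : α → ℝ} (hv : M.IsAdmissible U v) (hVU : V ⊆ U) :
    M.IsAdmissible V v :=
  fun a ha => hv a (hVU ha)

lemma IsAdmissible.update_of_parallel {U : Finset α} {v : α → ℝ} (hv : M.IsAdmissible U v)
    {e f : α} (he : e ∈ U) (hf : f ∈ U) (hre : M.r {e} ≠ 0) (hrf : M.r {f} ≠ 0) :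
    M.IsAdmissible U (Function.update v e (v e + v f + v e * v f)) := by
  intro a ha
  rcases eq_or_ne a e with rfl | hae
  · obtain ⟨hea, hae⟩ := (hv a he).2 hre
    obtain ⟨hfa, haf⟩ := (hv f hf).2 hrf
    rw [Function.update_self]
    exact ⟨fun h => absurd h hre, fun _ => ⟨by nlinarith, by nlinarith⟩⟩
  · simpa only [Function.update_of_ne hae] using hv a ha

lemma IsAdmissible.contract_singleton {U : Finset α} {v : α → ℝ} (hv : M.IsAdmissible U v)
    {t : α} (ht : t ∈ U) (hnonloop : ∀ a ∈ U, M.r {a} ≠ 0)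
    (hsimple : ∀ a ∈ U, a ≠ t → M.r {t, a} ≠ 1) :
    (M.contract {t}).IsAdmissible (U.erase t) v := by
  intro a ha
  obtain ⟨hat, haU⟩ := mem_erase.1 ha
  have hr : (M.contract {t}).r {a} ≠ 0 := by
    have := hsimple a haU hat
    have := hnonloop t ht
    have := M.r_singleton_le_one t
    have := M.mono (singleton_subset_iff.2 (mem_insert_self t {a}))
    rw [contract_r, ← insert_eq]
    omega
  exact ⟨fun h => absurd h hr, fun _ => (hv a haU).2 (hnonloop a haU)⟩

theorem neg_one_pow_mul_coeffOn_nonneg {U : Finset α} {v : α → ℝ} (hv : M.IsAdmissible U v)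
    (k : ℕ) : 0 ≤ (-1) ^ k * M.coeffOn U k v := by
  induction U using Finset.strongInduction generalizing M v k with
  | H U ih =>
  by_cases hloop : ∃ t ∈ U, M.r {t} = 0
  · obtain ⟨t, ht, ht0⟩ := hloop
    have hdel := ih _ (erase_ssubset ht) (hv.mono (erase_subset t U)) k
    rw [← insert_erase ht, M.coeffOn_insert_of_loop (notMem_erase t U) ht0, mul_left_comm]
    exact mul_nonneg (by linarith [(hv t ht).1 ht0]) hdel
  push Not at hloop
  by_cases hpar : ∃ e ∈ U, ∃ f ∈ U, e ≠ f ∧ M.r {e, f} = 1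
  · obtain ⟨e, he, f, hf, hef, hr⟩ := hpar
    rw [← insert_erase hf, M.coeffOn_insert_of_parallel (mem_erase.2 ⟨hef, he⟩)
      (notMem_erase f U) (hloop e he) (hloop f hf) hr]
    exact ih _ (erase_ssubset hf)
      ((hv.update_of_parallel he hf (hloop e he) (hloop f hf)).mono (erase_subset f U)) k
  push Not at hpar
  rcases U.eq_empty_or_nonempty with rfl | ⟨t, ht⟩
  · rw [coeffOn_empty]
    split_ifs with hk <;> simp [hk]
  have hdel := ih _ (erase_ssubset ht) (hv.mono (erase_subset t U))
  rw [← insert_erase ht]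
  cases k with
  | zero =>
    rw [M.coeffOn_insert_zero_of_nonloop (notMem_erase t U) (hloop t ht)]
    exact hdel 0
  | succ k =>
    have hcon := ih _ (erase_ssubset ht)
      (hv.contract_singleton ht hloop fun a ha hat => hpar t ht a ha hat.symm) k
    have hvt : v t ≤ 0 := ((hv t ht).2 (hloop t ht)).2
    rw [M.coeffOn_insert_succ_of_nonloop (notMem_erase t U) (hloop t ht)]
    have hsplit : ∀ D C : ℝ, (-1) ^ (k + 1) * (D + v t * C)
        = (-1) ^ (k + 1) * D + -v t * ((-1) ^ k * C) := fun D C => by ring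
    rw [hsplit]
    exact add_nonneg (hdel (k + 1)) (mul_nonneg (neg_nonneg.2 hvt) hcon)

end RankMatroid

section MixedPartials

variable {𝕜 : Type*} [NontriviallyNormedField 𝕜] {α : Type*} [Fintype α] [DecidableEq α]

omit [DecidableEq α] in
lemma contDiff_prod_apply (A : Finset α) {n : WithTop ℕ∞} :
    ContDiff 𝕜 n fun w : α → 𝕜 => ∏ a ∈ A, w a :=
  contDiff_prod fun a _ => contDiff_apply 𝕜 𝕜 a

lemma fderiv_prod_apply_single (A : Finset α) (v : α → 𝕜) (c : α) :
    fderiv 𝕜 (fun w : α → 𝕜 => ∏ a ∈ A, w a) v (Pi.single c 1)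
      = if c ∈ A then ∏ a ∈ A.erase c, v a else 0 := by
  rw [(HasFDerivAt.finsetProd fun a _ => hasFDerivAt_apply a v).fderiv]
  simp [Pi.single_apply]

lemma iteratedFDeriv_prod_apply_single {ℓ : ℕ} (A : Finset α) {e : Fin ℓ → α}
    (he : Function.Injective e) (v : α → 𝕜) :
    iteratedFDeriv 𝕜 ℓ (fun w : α → 𝕜 => ∏ a ∈ A, w a) v (fun i => Pi.single (e i) 1)
      = if image e univ ⊆ A then ∏ a ∈ A \ image e univ, v a else 0 := by
  induction ℓ generalizing A with
  | zero => simp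
  | succ ℓ ih =>
    rw [iteratedFDeriv_succ_apply_right, ← iteratedFDeriv_clm_apply_const_apply
      ((contDiff_prod_apply A).fderiv_right le_rfl) le_rfl]
    set c := e (Fin.last ℓ)
    have himage : image e univ = insert c (image (e ∘ Fin.castSucc) univ) := by
      ext a
      simp [Fin.exists_fin_succ', or_comm, eq_comm, c]
    have hc : c ∉ image (e ∘ Fin.castSucc) univ := by
      simp [c, he.eq_iff, Fin.castSucc_ne_last]
    simp only [fderiv_prod_apply_single, himage, insert_subset_iff]
    by_cases hcA : c ∈ A
    · simp only [hcA, if_true, true_and]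
      refine (ih (A.erase c) (he.comp (Fin.castSucc_injective ℓ))).trans ?_
      simp [subset_erase, hc, sdiff_insert, erase_sdiff_comm]
    · simp [hcA]

lemma iteratedFDeriv_matCoeff_apply_single (M : RankMatroid α) (s : ℕ) {ℓ : ℕ}
    {e : Fin ℓ → α} (he : Function.Injective e) (v : α → ℝ) :
    iteratedFDeriv ℝ ℓ (fun w : α → ℝ => matCoeff M s w) v (fun i => Pi.single (e i) 1)
      = ∑ A ∈ univ.powerset.filter (fun A => M.r A = s ∧ image e univ ⊆ A),
          ∏ a ∈ A \ image e univ, v a := by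
  simp only [matCoeff]
  rw [iteratedFDeriv_fun_sum_apply fun A _ => (contDiff_prod_apply A).contDiffAt,
    _root_.sum_apply, ← filter_filter, sum_filter (image e univ ⊆ ·)]
  exact sum_congr rfl fun A _ => iteratedFDeriv_prod_apply_single A he v

end MixedPartials

theorem matCoeff_mixed_partials_sign_general {α : Type*} [DecidableEq α] [Fintype α]
    (M : RankMatroid α) (ℓ : ℕ) (e : Fin ℓ → α) (he : Function.Injective e)
    (S : Finset α) (hS : S = Finset.image e Finset.univ)
    (ρ : ℕ) (hρ : ρ = M.r S) (v : α → ℝ)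
    (hnotspanned : ∀ a : α, a ∉ S → M.r (insert a S) ≠ M.r S → -2 ≤ v a ∧ v a ≤ 0)
    (hspanned : ∀ a : α, a ∉ S → M.r (insert a S) = M.r S → -1 ≤ v a)
    (s : ℕ) :
    0 ≤ (-1 : ℝ) ^ (s + ρ) *
      iteratedFDeriv ℝ ℓ (fun w : α → ℝ => matCoeff M s w) v
        (fun i : Fin ℓ => Pi.single (e i) (1 : ℝ)) := by
  subst hρ
  rw [iteratedFDeriv_matCoeff_apply_single M s he v, ← hS]
  rcases lt_or_ge s (M.r S) with hlt | hle
  · have hempty : univ.powerset.filter (fun A => M.r A = s ∧ S ⊆ A) = ∅ :=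
      filter_eq_empty_iff.2 fun A _ hA => by
        have := M.mono hA.2
        omega
    rw [hempty, sum_empty, mul_zero]
  obtain ⟨k, rfl⟩ := Nat.exists_eq_add_of_le hle
  have hadm : (M.contract S).IsAdmissible (univ \ S) v := fun a ha => by
    have haS := (mem_sdiff.1 ha).2
    simp only [ne_eq, RankMatroid.contract_r_singleton_eq_zero_iff]
    exact ⟨hspanned a haS, hnotspanned a haS⟩
  rw [← M.coeffOn_contract_compl, show M.r S + k + M.r S = k + 2 * M.r S by ring, pow_add,
    pow_mul, neg_one_sq, one_pow, mul_one]
  exact RankMatroid.neg_one_pow_mul_coeffOn_nonneg hadm k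

/-- Let `e₁, …, e_ℓ` be distinct elements of a matroid `M`, forming a set `S` of rank `ρ`.
Suppose `-2 ≤ v_a ≤ 0` for all elements `a ∉ S` not spanned by `S`, and `v_a ≥ -1` for
all `a ∉ S` spanned by `S` (i.e. with `r(S ∪ {a}) = r(S)`).  Then for every `0 ≤ s ≤ r(E)`
the mixed partial derivative satisfies
`(-1)^{s+ρ} ∂^ℓ C̃_M^{[s]}(v) / ∂v_{e₁} ⋯ ∂v_{e_ℓ} ≥ 0`. -/
theorem matCoeff_mixed_partials_sign {α : Type*} [DecidableEq α] [Fintype α]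
    (M : RankMatroid α) (ℓ : ℕ) (e : Fin ℓ → α) (he : Function.Injective e)
    (S : Finset α) (hS : S = Finset.image e Finset.univ)
    (ρ : ℕ) (hρ : ρ = M.r S) (v : α → ℝ)
    (hnotspanned : ∀ a : α, a ∉ S → M.r (insert a S) ≠ M.r S → -2 ≤ v a ∧ v a ≤ 0)
    (hspanned : ∀ a : α, a ∉ S → M.r (insert a S) = M.r S → -1 ≤ v a)
    (s : ℕ) (hs : s ≤ M.r Finset.univ) :
    0 ≤ (-1 : ℝ) ^ (s + ρ) *
      iteratedFDeriv ℝ ℓ (fun w : α → ℝ => matCoeff M s w) v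
        (fun i : Fin ℓ => Pi.single (e i) (1 : ℝ)) :=
  matCoeff_mixed_partials_sign_general M ℓ e he S hS ρ hρ v hnotspanned hspanned s
end
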